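/- arXiv:1610.07481 — 3 statements merged into one kernel-verified Lean document; each statement's English description precedes it below -/
import Mathlib

section
/- (Rough Gronwall Lemma.) Fix T > 0 and let g : [0,T] → [0,∞) be a path such that for some constants C, L > 0, κ ≥ 1 and some controls ω₁, ω₂ on [0,T] with ω₁ regular, one has g_t − g_s ≤ C (sup_{0 ≤ r ≤ t} g_r) ω₁(s,t)^{1/κ} + ω₂(s,t) for every s ≤ t in [0,T] satisfying ω₁(s,t) ≤ L. Then sup_{0 ≤ t ≤ T} g_t ≤ 2 e^{c ω₁(0,T)} { g_0 + sup_{0 ≤ t ≤ T} ( ω₂(0,t) e^{−c ω₁(0,t)} ) }, where c = max( 1/L , (2Ce²)^κ ). -/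
open MeasureTheory Set Filter

noncomputable section

/-- The set of partition sums `Σ ‖g(t_i, t_{i+1})‖^p` over partitions of `[s,t]`. -/
def partitionSums {E : Type*} [NormedAddCommGroup E] (p s t : ℝ) (g : ℝ → ℝ → E) : Set ℝ :=
  {x | ∃ (n : ℕ) (u : ℕ → ℝ), u 0 = s ∧ u n = t ∧ (∀ i < n, u i < u (i + 1)) ∧
    x = ∑ i ∈ Finset.range n, ‖g (u i) (u (i + 1))‖ ^ p}

/-- `‖g‖^p_{V̄^p_2([s,t];E)}`, the `p`-th power of the `p`-variation norm. -/
def pVarSum {E : Type*} [NormedAddCommGroup E] (p s t : ℝ) (g : ℝ → ℝ → E) : ℝ :=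
  sSup (partitionSums p s t g)

/-- The `p`-variation norm `‖g‖_{V̄^p_2([s,t];E)}`. -/
def pVarNorm {E : Type*} [NormedAddCommGroup E] (p s t : ℝ) (g : ℝ → ℝ → E) : ℝ :=
  (pVarSum p s t g) ^ (1 / p)

/-- A control on the interval `[a,b]`: nonnegative and superadditive. -/
def IsControl (a b : ℝ) (ω : ℝ → ℝ → ℝ) : Prop :=
  (∀ s t, a ≤ s → s ≤ t → t ≤ b → 0 ≤ ω s t) ∧
  (∀ s u t, a ≤ s → s ≤ u → u ≤ t → t ≤ b → ω s u + ω u t ≤ ω s t)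

/-- A regular control: moreover `ω(s,t) → 0` as `|t - s| → 0`. -/
def IsRegularControl (a b : ℝ) (ω : ℝ → ℝ → ℝ) : Prop :=
  IsControl a b ω ∧
  ∀ ε > 0, ∃ δ > 0, ∀ s t, a ≤ s → s ≤ t → t ≤ b → t - s < δ → ω s t < ε

/-- `g ∈ V^p_2([a,b];E)` : finite `p`-variation whose associated control is regular. -/
def MemVp2 {E : Type*} [NormedAddCommGroup E] (p a b : ℝ) (g : ℝ → ℝ → E) : Prop :=
  (∀ s t, a ≤ s → s ≤ t → t ≤ b → BddAbove (partitionSums p s t g)) ∧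
  IsRegularControl a b (fun s t => pVarSum p s t g)

/-- `y ∈ V^p_1([a,b];E)` for a path `y`. -/
def MemVp1 {E : Type*} [NormedAddCommGroup E] (p a b : ℝ) (y : ℝ → E) : Prop :=
  MemVp2 p a b (fun s t => y t - y s)

/-! Cut `[0, T]` greedily: from `s`, go to the supremum `τ` of the times `u` with
`ω₁(s, u) ≤ 1/c`. Before `τ` the hypothesis bounds the increments of `g` by `G_τ / 14 + ω₂`,
where `G` is the running supremum of `g`; since `ω₁(s, ·)` may jump at `τ`, the endpoint is
reached by one more step of length below the regularity modulus of `ω₁`. Hence `G` grows by a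
factor at most `7/6` per stretch, up to the `ω₂`-increment. Two consecutive stretches carry
`ω₁`-mass more than `1/c`, so after time `t` there are at most about
`2c (ω₁(0, T) - ω₁(0, t))` stretches, and since `(7/6)² ≤ e`, summing the discrete Gronwall
recursion along the stretches gives the bound. -/

open Real

namespace IsControl

variable {a b : ℝ} {ω : ℝ → ℝ → ℝ}

lemma self_eq_zero (hω : IsControl a b ω) {s : ℝ} (has : a ≤ s) (hsb : s ≤ b) : ω s s = 0 :=
  le_antisymm (by linarith [hω.2 s s s has le_rfl le_rfl hsb]) (hω.1 s s has le_rfl hsb)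

lemma mono_right (hω : IsControl a b ω) {s t u : ℝ} (has : a ≤ s) (hst : s ≤ t) (htu : t ≤ u)
    (hub : u ≤ b) : ω s t ≤ ω s u := by
  linarith [hω.2 s t u has hst htu hub, hω.1 t u (has.trans hst) htu hub]

end IsControl

def runningSup (g : ℝ → ℝ) (t : ℝ) : ℝ :=
  sSup (g '' Icc 0 t)

section runningSup

variable {g : ℝ → ℝ} {T : ℝ}

lemma runningSup_zero (g : ℝ → ℝ) : runningSup g 0 = g 0 := by
  simp [runningSup]

lemma le_runningSup (hbdd : BddAbove (g '' Icc 0 T)) {r t : ℝ} (hr : 0 ≤ r) (hrt : r ≤ t)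
    (htT : t ≤ T) : g r ≤ runningSup g t :=
  le_csSup (hbdd.mono (image_mono (Icc_subset_Icc_right htT))) ⟨r, ⟨hr, hrt⟩, rfl⟩

lemma runningSup_mono (hbdd : BddAbove (g '' Icc 0 T)) {s t : ℝ} (hs : 0 ≤ s) (hst : s ≤ t)
    (htT : t ≤ T) : runningSup g s ≤ runningSup g t :=
  csSup_le ((nonempty_Icc.2 hs).image g) <| by
    rintro _ ⟨r, hr, rfl⟩
    exact le_runningSup hbdd hr.1 (hr.2.trans hst) htT

lemma runningSup_nonneg (hbdd : BddAbove (g '' Icc 0 T)) (hg0 : 0 ≤ g 0) {t : ℝ} (ht : 0 ≤ t)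
    (htT : t ≤ T) : 0 ≤ runningSup g t :=
  hg0.trans (le_runningSup hbdd le_rfl ht htT)

end runningSup

section step

variable {T θ η δ : ℝ} {g : ℝ → ℝ} {ω₁ ω₂ : ℝ → ℝ → ℝ}

lemma sub_le_two_mul_runningSup (hbdd : BddAbove (g '' Icc 0 T)) (hθ : 0 ≤ θ) (hδ : 0 < δ)
    (hω₂ : IsControl 0 T ω₂)
    (hincr : ∀ a b, 0 ≤ a → a ≤ b → b ≤ T → ω₁ a b ≤ η →
      g b - g a ≤ θ * runningSup g b + ω₂ a b)
    (hreg : ∀ a b, 0 ≤ a → a ≤ b → b ≤ T → b - a < δ → ω₁ a b ≤ η)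
    {s r τ : ℝ} (hs : 0 ≤ s) (hsr : s < r) (hrτ : r ≤ τ) (hτT : τ ≤ T)
    (hbelow : ∀ u, s ≤ u → u < τ → ω₁ s u ≤ η) :
    g r - g s ≤ 2 * θ * runningSup g τ + ω₂ s r := by
  -- `ω₁ s r` may exceed `η` when `r = τ`; split `[s, r]` at a point `u < τ` within `δ` of `r`.
  set u := max s (r - δ / 2)
  have hsu : s ≤ u := le_max_left _ _
  have hur : u ≤ r := max_le hsr.le (by linarith)
  have hu : 0 ≤ u := hs.trans hsu
  have hrT : r ≤ T := hrτ.trans hτT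
  have hfirst := hincr s u hs hsu (hur.trans hrT)
    (hbelow u hsu (lt_of_lt_of_le (max_lt hsr (by linarith)) hrτ))
  have hsecond := hincr u r hu hur hrT (hreg u r hu hur hrT (by
    have := le_max_right s (r - δ / 2); linarith))
  have hGu := runningSup_mono hbdd hu (hur.trans hrτ) hτT
  have hGr := runningSup_mono hbdd (hu.trans hur) hrτ hτT
  nlinarith [hω₂.2 s u r hs hsu hur hrT]

lemma one_sub_two_mul_mul_runningSup_le (hbdd : BddAbove (g '' Icc 0 T)) (hg0 : 0 ≤ g 0)
    (hθ : 0 ≤ θ) (hδ : 0 < δ) (hω₂ : IsControl 0 T ω₂)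
    (hincr : ∀ a b, 0 ≤ a → a ≤ b → b ≤ T → ω₁ a b ≤ η →
      g b - g a ≤ θ * runningSup g b + ω₂ a b)
    (hreg : ∀ a b, 0 ≤ a → a ≤ b → b ≤ T → b - a < δ → ω₁ a b ≤ η)
    {s τ : ℝ} (hs : 0 ≤ s) (hsτ : s ≤ τ) (hτT : τ ≤ T)
    (hbelow : ∀ u, s ≤ u → u < τ → ω₁ s u ≤ η) :
    (1 - 2 * θ) * runningSup g τ ≤ runningSup g s + ω₂ s τ := by
  have hGτ := runningSup_nonneg hbdd hg0 (hs.trans hsτ) hτT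
  have hω₂sτ := hω₂.1 s τ hs hsτ hτT
  suffices runningSup g τ ≤ runningSup g s + 2 * θ * runningSup g τ + ω₂ s τ by linarith
  refine csSup_le ((nonempty_Icc.2 (hs.trans hsτ)).image g) ?_
  rintro _ ⟨r, ⟨hr, hrτ⟩, rfl⟩
  rcases le_or_gt r s with hrs | hsr
  · have := le_runningSup hbdd hr hrs (hsτ.trans hτT)
    nlinarith
  · have := sub_le_two_mul_runningSup hbdd hθ hδ hω₂ hincr hreg hs hsr hrτ hτT hbelow
    have := le_runningSup hbdd hs le_rfl (hsτ.trans hτT)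
    linarith [hω₂.mono_right hs hsr.le hrτ hτT]

end step

lemma add_nat_mul_le_of_lt_add_two {T η : ℝ} {ω : ℝ → ℝ → ℝ} (hω : IsControl 0 T ω)
    {t : ℕ → ℝ} (ht : Monotone t) (hmem : ∀ k, t k ∈ Icc 0 T) {N : ℕ}
    (hgap : ∀ l, l + 2 ≤ N → η < ω (t l) (t (l + 2))) {k : ℕ} (hk : k ≤ N) :
    ω 0 (t k) + ((N - k) / 2 : ℕ) * η ≤ ω 0 (t N) := by
  have hsteps : ∀ j : ℕ, k + 2 * j ≤ N → ω 0 (t k) + j * η ≤ ω 0 (t (k + 2 * j)) := by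
    intro j
    induction j with
    | zero => simp
    | succ j ih =>
      intro hj
      have hsplit := hω.2 0 (t (k + 2 * j)) (t (k + 2 * j + 2)) le_rfl (hmem _).1
        (ht (by omega)) (hmem _).2
      have := hgap (k + 2 * j) (by omega)
      rw [show k + 2 * (j + 1) = k + 2 * j + 2 by ring]
      push_cast
      linarith [ih (by omega)]
  exact (hsteps _ (by omega)).trans
    (hω.mono_right le_rfl (hmem _).1 (ht (by omega)) (hmem N).2)

section exitTime

variable {T η δ : ℝ} {ω : ℝ → ℝ → ℝ}

def exitTime (T η : ℝ) (ω : ℝ → ℝ → ℝ) (s : ℝ) : ℝ :=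
  sSup {u ∈ Icc s T | ω s u ≤ η}

def exitTimes (T η : ℝ) (ω : ℝ → ℝ → ℝ) (n : ℕ) : ℝ :=
  (exitTime T η ω)^[n] 0

lemma exitTimes_succ (T η : ℝ) (ω : ℝ → ℝ → ℝ) (n : ℕ) :
    exitTimes T η ω (n + 1) = exitTime T η ω (exitTimes T η ω n) :=
  Function.iterate_succ_apply' _ n 0

variable {s : ℝ}

lemma le_exitTime {u : ℝ} (hsu : s ≤ u) (huT : u ≤ T) (hu : ω s u ≤ η) :
    u ≤ exitTime T η ω s :=
  le_csSup ⟨T, fun _ hv => hv.1.2⟩ ⟨⟨hsu, huT⟩, hu⟩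

lemma exitTime_mem_Icc (hω : IsControl 0 T ω) (hη : 0 ≤ η) (hs : 0 ≤ s) (hsT : s ≤ T) :
    exitTime T η ω s ∈ Icc s T :=
  ⟨le_exitTime le_rfl hsT ((hω.self_eq_zero hs hsT).le.trans hη),
    csSup_le ⟨s, ⟨le_rfl, hsT⟩, (hω.self_eq_zero hs hsT).le.trans hη⟩ fun _ hv => hv.1.2⟩

lemma le_of_lt_exitTime (hω : IsControl 0 T ω) (hη : 0 ≤ η) (hs : 0 ≤ s) (hsT : s ≤ T)
    {u : ℝ} (hsu : s ≤ u) (hu : u < exitTime T η ω s) : ω s u ≤ η := by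
  obtain ⟨v, ⟨⟨-, hvT⟩, hv⟩, huv⟩ := exists_lt_of_lt_csSup
    (s := {u ∈ Icc s T | ω s u ≤ η}) ⟨s, ⟨le_rfl, hsT⟩, (hω.self_eq_zero hs hsT).le.trans hη⟩ hu
  exact (hω.mono_right hs hsu huv.le hvT).trans hv

lemma lt_of_exitTime_lt (hω : IsControl 0 T ω) (hη : 0 ≤ η) (hs : 0 ≤ s) (hsT : s ≤ T)
    {v : ℝ} (hv : exitTime T η ω s < v) (hvT : v ≤ T) : η < ω s v := by
  by_contra! h
  exact hv.not_ge (le_exitTime ((exitTime_mem_Icc hω hη hs hsT).1.trans hv.le) hvT h)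

lemma min_le_exitTime (hs : 0 ≤ s) (hsT : s ≤ T) (hδ : 0 < δ)
    (hreg : ∀ a b, 0 ≤ a → a ≤ b → b ≤ T → b - a < δ → ω a b ≤ η) :
    min T (s + δ / 2) ≤ exitTime T η ω s := by
  have hs' : s ≤ min T (s + δ / 2) := le_min hsT (by linarith)
  exact le_exitTime hs' (min_le_left _ _)
    (hreg _ _ hs hs' (min_le_left _ _) (by linarith [min_le_right T (s + δ / 2)]))

lemma exitTimes_mem_Icc (hω : IsControl 0 T ω) (hη : 0 ≤ η) (hT : 0 ≤ T) (n : ℕ) :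
    exitTimes T η ω n ∈ Icc 0 T := by
  induction n with
  | zero => exact ⟨le_rfl, hT⟩
  | succ n ih =>
    rw [exitTimes_succ]
    have h := exitTime_mem_Icc hω hη ih.1 ih.2
    exact ⟨ih.1.trans h.1, h.2⟩

lemma monotone_exitTimes (hω : IsControl 0 T ω) (hη : 0 ≤ η) (hT : 0 ≤ T) :
    Monotone (exitTimes T η ω) :=
  monotone_nat_of_le_succ fun n => by
    have h := exitTimes_mem_Icc hω hη hT n
    rw [exitTimes_succ]
    exact (exitTime_mem_Icc hω hη h.1 h.2).1

lemma min_le_exitTimes (hω : IsControl 0 T ω) (hη : 0 ≤ η) (hT : 0 ≤ T) (hδ : 0 < δ)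
    (hreg : ∀ a b, 0 ≤ a → a ≤ b → b ≤ T → b - a < δ → ω a b ≤ η) (n : ℕ) :
    min T (n * (δ / 2)) ≤ exitTimes T η ω n := by
  induction n with
  | zero => simp [exitTimes, hT]
  | succ n ih =>
    have h := exitTimes_mem_Icc hω hη hT n
    rw [exitTimes_succ]
    refine le_trans ?_ (min_le_exitTime h.1 h.2 hδ hreg)
    push_cast
    rw [add_mul, one_mul]
    calc min T (n * (δ / 2) + δ / 2) ≤ min T (min T (n * (δ / 2)) + δ / 2) :=
          le_min (min_le_left _ _)
            (by rw [← min_add_add_right]; exact min_le_min (by linarith) le_rfl)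
      _ ≤ min T (exitTimes T η ω n + δ / 2) := min_le_min le_rfl (by linarith)

lemma exists_exitTimes_eq (hω : IsControl 0 T ω) (hη : 0 ≤ η) (hT : 0 ≤ T) (hδ : 0 < δ)
    (hreg : ∀ a b, 0 ≤ a → a ≤ b → b ≤ T → b - a < δ → ω a b ≤ η) :
    ∃ n, exitTimes T η ω n = T := by
  obtain ⟨n, hn⟩ := exists_nat_ge (T / (δ / 2))
  refine ⟨n, le_antisymm (exitTimes_mem_Icc hω hη hT n).2 ?_⟩
  have hTn : T ≤ n * (δ / 2) := (div_le_iff₀ (by linarith)).1 hn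
  simpa [min_eq_left hTn] using min_le_exitTimes hω hη hT hδ hreg n

lemma lt_of_exitTimes_succ_lt (hω : IsControl 0 T ω) (hη : 0 ≤ η) (hT : 0 ≤ T) (hδ : 0 < δ)
    (hreg : ∀ a b, 0 ≤ a → a ≤ b → b ≤ T → b - a < δ → ω a b ≤ η) {l : ℕ}
    (hl : exitTimes T η ω (l + 1) < T) :
    η < ω (exitTimes T η ω l) (exitTimes T η ω (l + 2)) := by
  have h := exitTimes_mem_Icc hω hη hT l
  have h' := exitTimes_mem_Icc hω hη hT (l + 1)
  refine lt_of_exitTime_lt hω hη h.1 h.2 ?_ (exitTimes_mem_Icc hω hη hT (l + 2)).2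
  rw [← exitTimes_succ, exitTimes_succ T η ω (l + 1)]
  exact lt_of_lt_of_le (lt_min hl (by linarith)) (min_le_exitTime h'.1 h'.2 hδ hreg)

lemma add_mul_le_of_exitTimes_eq (hω : IsControl 0 T ω) (hη : 0 ≤ η) (hT : 0 ≤ T) (hδ : 0 < δ)
    (hreg : ∀ a b, 0 ≤ a → a ≤ b → b ≤ T → b - a < δ → ω a b ≤ η) {N : ℕ}
    (hN : exitTimes T η ω N = T) (hmin : ∀ m < N, exitTimes T η ω m ≠ T) {k : ℕ} (hk : k ≤ N) :
    ω 0 (exitTimes T η ω k) + ((N - k) / 2 : ℕ) * η ≤ ω 0 T := by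
  have hmem := exitTimes_mem_Icc hω hη hT
  refine (add_nat_mul_le_of_lt_add_two hω (monotone_exitTimes hω hη hT) hmem
    (fun l hl => lt_of_exitTimes_succ_lt hω hη hT hδ hreg
      (lt_of_le_of_ne (hmem _).2 (hmin _ (by omega)))) hk).trans_eq ?_
  rw [hN]

end exitTime

lemma le_pow_mul_add_sum_of_le_mul_add_sub {ρ : ℝ} (hρ : 0 ≤ ρ) {G a : ℕ → ℝ} (ha0 : 0 ≤ a 0)
    {N : ℕ} (hrec : ∀ k < N, G (k + 1) ≤ ρ * (G k + (a (k + 1) - a k))) :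
    G N ≤ ρ ^ N * G 0 + ρ * a N + (ρ - 1) * ∑ k ∈ Finset.range N, ρ ^ (N - k) * a k := by
  induction N with
  | zero => simpa using mul_nonneg hρ ha0
  | succ N ih =>
    have hshift : ∑ k ∈ Finset.range (N + 1), ρ ^ (N + 1 - k) * a k
        = ρ * ∑ k ∈ Finset.range N, ρ ^ (N - k) * a k + ρ * a N := by
      rw [Finset.sum_range_succ, Finset.mul_sum, Nat.add_sub_cancel_left, pow_one]
      congr 1
      refine Finset.sum_congr rfl fun k hk => ?_
      rw [Nat.sub_add_comm (Finset.mem_range.1 hk).le, pow_succ]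
      ring
    have := mul_le_mul_of_nonneg_left (ih fun k hk => hrec k (by omega)) hρ
    rw [hshift, pow_succ]
    nlinarith [hrec N (by omega)]

lemma sum_pow_sub_le {q : ℝ} (hq0 : 0 ≤ q) (hq1 : q < 1) (N : ℕ) :
    ∑ k ∈ Finset.range N, q ^ (N - k) ≤ q / (1 - q) := by
  rw [← Finset.sum_range_reflect]
  calc ∑ j ∈ Finset.range N, q ^ (N - (N - 1 - j))
      = q * ∑ j ∈ Finset.range N, q ^ j := by
        rw [Finset.mul_sum]
        refine Finset.sum_congr rfl fun j hj => ?_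
        rw [← pow_succ']
        congr 1
        have := Finset.mem_range.1 hj
        omega
    _ ≤ q * (1 / (1 - q)) := by
        refine mul_le_mul_of_nonneg_left ?_ hq0
        have := geom_sum_Ico_le_of_lt_one (m := 0) (n := N) hq0 hq1
        rwa [← Finset.range_eq_Ico, pow_zero] at this
    _ = q / (1 - q) := by ring

lemma exp_neg_half_le : exp (-(1 / 2)) ≤ 5 / 8 := by
  have hsq : exp (-(1 / 2)) * exp (-(1 / 2)) * exp 1 = 1 := by
    rw [← exp_add, ← exp_add]; norm_num
  nlinarith [exp_one_gt_d9, exp_pos (-(1 / 2))]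

lemma pow_le_two_mul_exp {N : ℕ} {B : ℝ} (hN : ((N / 2 : ℕ) : ℝ) ≤ B) :
    (7 / 6 : ℝ) ^ N ≤ 2 * exp B := by
  have hsq : (7 / 6 : ℝ) ^ 2 ≤ exp 1 := by nlinarith [add_one_le_exp 1]
  calc (7 / 6 : ℝ) ^ N ≤ (7 / 6) ^ (2 * (N / 2) + 1) := pow_le_pow_right₀ (by norm_num) (by omega)
    _ = 7 / 6 * ((7 / 6) ^ 2) ^ (N / 2) := by rw [pow_succ, pow_mul]; ring
    _ ≤ 7 / 6 * exp 1 ^ (N / 2) := by gcongr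
    _ = 7 / 6 * exp (N / 2 : ℕ) := by rw [← exp_nat_mul, mul_one]
    _ ≤ 2 * exp B := by gcongr; norm_num [hN]

lemma exp_sub_nat_div_two_le (B : ℝ) (m : ℕ) :
    exp (B - ((m / 2 : ℕ) : ℝ)) ≤ exp (1 / 2) * exp B * exp (-(1 / 2)) ^ m := by
  have hm : (m : ℝ) ≤ 2 * ((m / 2 : ℕ) : ℝ) + 1 := by
    exact_mod_cast (by omega : m ≤ 2 * (m / 2) + 1)
  rw [← exp_nat_mul, ← exp_add, ← exp_add]
  exact exp_le_exp.2 (by linarith)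

lemma sum_pow_mul_le {N : ℕ} {a : ℕ → ℝ} {S B : ℝ} (hS : 0 ≤ S)
    (ha : ∀ k < N, a k ≤ S * exp (B - ((N - k) / 2 : ℕ))) :
    ∑ k ∈ Finset.range N, (7 / 6 : ℝ) ^ (N - k) * a k ≤ 5 * S * exp B := by
  set q : ℝ := 7 / 6 * exp (-(1 / 2))
  have hq0 : 0 ≤ q := by positivity
  have hq : q ≤ 35 / 48 := by simp only [q]; linarith [exp_neg_half_le]
  have hhalf : exp (1 / 2) * q = 7 / 6 := by
    rw [mul_left_comm, ← exp_add]; norm_num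
  calc ∑ k ∈ Finset.range N, (7 / 6 : ℝ) ^ (N - k) * a k
      ≤ ∑ k ∈ Finset.range N, S * exp B * exp (1 / 2) * q ^ (N - k) := by
        refine Finset.sum_le_sum fun k hk => ?_
        calc (7 / 6 : ℝ) ^ (N - k) * a k
            ≤ (7 / 6) ^ (N - k) * (S * (exp (1 / 2) * exp B * exp (-(1 / 2)) ^ (N - k))) := by
              gcongr
              exact (ha k (Finset.mem_range.1 hk)).trans
                (mul_le_mul_of_nonneg_left (exp_sub_nat_div_two_le B _) hS)
          _ = S * exp B * exp (1 / 2) * q ^ (N - k) := by rw [mul_pow]; ring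
    _ = S * exp B * exp (1 / 2) * ∑ k ∈ Finset.range N, q ^ (N - k) := by rw [Finset.mul_sum]
    _ ≤ S * exp B * exp (1 / 2) * (q / (1 - q)) := by
        gcongr
        exact sum_pow_sub_le hq0 (by linarith) N
    _ = S * exp B * (7 / 6 / (1 - q)) := by rw [← hhalf]; ring
    _ ≤ S * exp B * 5 := by
        gcongr
        rw [div_le_iff₀ (by linarith)]
        linarith
    _ = 5 * S * exp B := by ring

lemma le_two_mul_exp_of_le_mul_add_sub {N : ℕ} {G a : ℕ → ℝ} {S B : ℝ} (hS : 0 ≤ S)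
    (hG0 : 0 ≤ G 0) (ha0 : 0 ≤ a 0)
    (hrec : ∀ k < N, G (k + 1) ≤ 7 / 6 * (G k + (a (k + 1) - a k)))
    (hN : ((N / 2 : ℕ) : ℝ) ≤ B) (ha : ∀ k ≤ N, a k ≤ S * exp (B - ((N - k) / 2 : ℕ))) :
    G N ≤ 2 * exp B * (G 0 + S) := by
  have habel := le_pow_mul_add_sum_of_le_mul_add_sub (by norm_num) ha0 hrec
  have hfirst := mul_le_mul_of_nonneg_right (pow_le_two_mul_exp hN) hG0
  have hsum := sum_pow_mul_le hS fun k hk => ha k hk.le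
  have hlast : a N ≤ S * exp B := by simpa using ha N le_rfl
  linarith

section gronwall

variable {T η δ c S : ℝ} {g : ℝ → ℝ} {ω₁ ω₂ : ℝ → ℝ → ℝ}

lemma runningSup_exitTimes_succ_le (hT : 0 ≤ T) (hbdd : BddAbove (g '' Icc 0 T))
    (hg0 : 0 ≤ g 0) (hη : 0 ≤ η) (hδ : 0 < δ) (hω₁ : IsControl 0 T ω₁) (hω₂ : IsControl 0 T ω₂)
    (hincr : ∀ a b, 0 ≤ a → a ≤ b → b ≤ T → ω₁ a b ≤ η →
      g b - g a ≤ 14⁻¹ * runningSup g b + ω₂ a b)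
    (hreg : ∀ a b, 0 ≤ a → a ≤ b → b ≤ T → b - a < δ → ω₁ a b ≤ η) (k : ℕ) :
    runningSup g (exitTimes T η ω₁ (k + 1)) ≤ 7 / 6 * (runningSup g (exitTimes T η ω₁ k) +
      (ω₂ 0 (exitTimes T η ω₁ (k + 1)) - ω₂ 0 (exitTimes T η ω₁ k))) := by
  obtain ⟨hs, hsT⟩ := exitTimes_mem_Icc hω₁ hη hT k
  rw [exitTimes_succ]
  obtain ⟨hsτ, hτT⟩ := exitTime_mem_Icc hω₁ hη hs hsT
  have hstep := one_sub_two_mul_mul_runningSup_le hbdd hg0 (by norm_num) hδ hω₂ hincr hreg hs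
    hsτ hτT fun u hsu hu => le_of_lt_exitTime hω₁ hη hs hsT hsu hu
  linarith [hω₂.2 0 _ _ le_rfl hs hsτ hτT]

lemma runningSup_le_two_mul_exp (hT : 0 ≤ T) (hg0 : 0 ≤ g 0) (hc : 0 < c)
    (hω₁ : IsRegularControl 0 T ω₁) (hω₂ : IsControl 0 T ω₂)
    (hincr : ∀ a b, 0 ≤ a → a ≤ b → b ≤ T → ω₁ a b ≤ c⁻¹ →
      g b - g a ≤ 14⁻¹ * runningSup g b + ω₂ a b)
    (hS : ∀ t ∈ Icc 0 T, ω₂ 0 t ≤ S * exp (c * ω₁ 0 t)) :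
    runningSup g T ≤ 2 * exp (c * ω₁ 0 T) * (g 0 + S) := by
  have hS0 : 0 ≤ S := by
    have := hS 0 ⟨le_rfl, hT⟩
    rw [hω₁.1.self_eq_zero le_rfl hT, hω₂.self_eq_zero le_rfl hT, mul_zero, exp_zero,
      mul_one] at this
    exact this
  by_cases hbdd : BddAbove (g '' Icc 0 T)
  swap
  · rw [runningSup, Real.sSup_of_not_bddAbove hbdd]
    positivity
  have hη : 0 ≤ c⁻¹ := inv_nonneg.2 hc.le
  obtain ⟨δ, hδ, hreg⟩ := hω₁.2 c⁻¹ (inv_pos.2 hc)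
  replace hreg : ∀ a b, 0 ≤ a → a ≤ b → b ≤ T → b - a < δ → ω₁ a b ≤ c⁻¹ :=
    fun a b ha hab hbT h => (hreg a b ha hab hbT h).le
  set t := exitTimes T c⁻¹ ω₁
  have hmem : ∀ k, t k ∈ Icc 0 T := exitTimes_mem_Icc hω₁.1 hη hT
  have hend := exists_exitTimes_eq hω₁.1 hη hT hδ hreg
  set N := Nat.find hend
  have htN : t N = T := Nat.find_spec hend
  have hcount : ∀ k ≤ N, c * ω₁ 0 (t k) + ((N - k) / 2 : ℕ) ≤ c * ω₁ 0 T := by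
    intro k hk
    have := mul_le_mul_of_nonneg_left (add_mul_le_of_exitTimes_eq hω₁.1 hη hT hδ hreg htN
      (fun m hm => Nat.find_min hend hm) hk) hc.le
    rwa [mul_add, mul_left_comm, mul_inv_cancel₀ hc.ne', mul_one] at this
  have hbound := le_two_mul_exp_of_le_mul_add_sub (G := fun k => runningSup g (t k))
    (a := fun k => ω₂ 0 (t k)) hS0 (by simpa [t, exitTimes, runningSup_zero] using hg0)
    (hω₂.1 0 _ le_rfl (hmem 0).1 (hmem 0).2)
    (fun k _ => runningSup_exitTimes_succ_le hT hbdd hg0 hη hδ hω₁.1 hω₂ hincr hreg k)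
    (by simpa [t, exitTimes, hω₁.1.self_eq_zero le_rfl hT] using hcount 0 (Nat.zero_le N))
    (fun k hk => (hS _ (hmem k)).trans
      (mul_le_mul_of_nonneg_left (exp_le_exp.2 (by linarith [hcount k hk])) hS0))
  simpa [htN, t, exitTimes, runningSup_zero] using hbound

end gronwall

lemma mul_rpow_le_inv_fourteen {C κ c x : ℝ} (hC : 0 < C) (hκ : 0 < κ)
    (hc : (2 * C * exp 2) ^ κ ≤ c) (hx : 0 ≤ x) (hxc : x ≤ c⁻¹) : C * x ^ (1 / κ) ≤ 14⁻¹ := by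
  have hK : 0 < 2 * C * exp 2 := by positivity
  have hc0 : 0 < c := (rpow_pos_of_pos hK κ).trans_le hc
  have hroot : 2 * C * exp 2 ≤ c ^ (1 / κ) := by
    have := rpow_le_rpow (rpow_nonneg hK.le κ) hc (one_div_nonneg.2 hκ.le)
    rwa [← rpow_mul hK.le, mul_one_div_cancel hκ.ne', rpow_one] at this
  have hexp2 : 7 ≤ exp 2 := by
    have : exp 2 = exp 1 * exp 1 := by rw [← exp_add]; norm_num
    nlinarith [exp_one_gt_d9]
  calc C * x ^ (1 / κ) ≤ C * (c ^ (1 / κ))⁻¹ := by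
        rw [← inv_rpow hc0.le]
        gcongr
    _ ≤ C * (2 * C * exp 2)⁻¹ := by gcongr
    _ = (2 * exp 2)⁻¹ := by field_simp
    _ ≤ 14⁻¹ := by gcongr; linarith

lemma le_sSup_mul_exp {T c : ℝ} {ω₁ ω₂ : ℝ → ℝ → ℝ} (hc : 0 ≤ c) (hω₁ : IsControl 0 T ω₁)
    (hω₂ : IsControl 0 T ω₂) {t : ℝ} (ht : t ∈ Icc 0 T) :
    ω₂ 0 t ≤ sSup ((fun t => ω₂ 0 t * exp (-c * ω₁ 0 t)) '' Icc 0 T) * exp (c * ω₁ 0 t) := by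
  have hbdd : BddAbove ((fun t => ω₂ 0 t * exp (-c * ω₁ 0 t)) '' Icc 0 T) := by
    refine ⟨ω₂ 0 T, ?_⟩
    rintro _ ⟨r, hr, rfl⟩
    have hdecay : exp (-c * ω₁ 0 r) ≤ 1 :=
      exp_le_one_iff.2 (by nlinarith [hω₁.1 0 r le_rfl hr.1 hr.2])
    calc ω₂ 0 r * exp (-c * ω₁ 0 r) ≤ ω₂ 0 r * 1 :=
          mul_le_mul_of_nonneg_left hdecay (hω₂.1 0 r le_rfl hr.1 hr.2)
      _ ≤ ω₂ 0 T := by rw [mul_one]; exact hω₂.mono_right le_rfl hr.1 hr.2 le_rfl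
  calc ω₂ 0 t = ω₂ 0 t * exp (-c * ω₁ 0 t) * exp (c * ω₁ 0 t) := by
        rw [mul_assoc, ← exp_add]; simp
    _ ≤ _ := mul_le_mul_of_nonneg_right (le_csSup hbdd ⟨t, ht, rfl⟩) (exp_pos _).le

/-- **Rough Gronwall lemma** (Lemma 2.7 / `lemma:basic-rough-gronwall`): if
`g : [0,T] → [0,∞)` satisfies `δg_{st} ≤ C (sup_{[0,t]} g) ω₁(s,t)^{1/κ} + ω₂(s,t)`
whenever `ω₁(s,t) ≤ L`, with `ω₁` a regular control and `ω₂` a control, then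
`sup_{[0,T]} g ≤ 2 e^{c ω₁(0,T)} (g₀ + sup_{t ∈ [0,T]} ω₂(0,t) e^{-c ω₁(0,t)})`,
where `c = max(1/L, (2Ce²)^κ)`. -/
theorem rough_gronwall (T C L κ : ℝ) (hT : 0 < T) (hC : 0 < C) (hL : 0 < L) (hκ : 1 ≤ κ)
    (g : ℝ → ℝ) (hg : ∀ t ∈ Set.Icc (0 : ℝ) T, 0 ≤ g t)
    (ω₁ ω₂ : ℝ → ℝ → ℝ)
    (hω₁ : IsRegularControl 0 T ω₁) (hω₂ : IsControl 0 T ω₂)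
    (hyp : ∀ s t, 0 ≤ s → s ≤ t → t ≤ T → ω₁ s t ≤ L →
      g t - g s ≤ C * sSup (g '' Set.Icc 0 t) * (ω₁ s t) ^ (1 / κ) + ω₂ s t) :
    sSup (g '' Set.Icc 0 T) ≤
      2 * Real.exp (max (1 / L) ((2 * C * Real.exp 2) ^ κ) * ω₁ 0 T) *
        (g 0 + sSup ((fun t => ω₂ 0 t *
          Real.exp (-(max (1 / L) ((2 * C * Real.exp 2) ^ κ)) * ω₁ 0 t)) '' Set.Icc 0 T)) := by
  set c := max (1 / L) ((2 * C * Real.exp 2) ^ κ)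
  have hc : 0 < c := lt_max_of_lt_left (by positivity)
  have hcL : c⁻¹ ≤ L := inv_le_of_inv_le₀ hL (by rw [← one_div]; exact le_max_left _ _)
  refine runningSup_le_two_mul_exp hT.le (hg 0 ⟨le_rfl, hT.le⟩) hc hω₁ hω₂ ?_
    fun t ht => le_sSup_mul_exp hc.le hω₁.1 hω₂ ht
  intro a b ha hab hbT hsmall
  have hsup : 0 ≤ runningSup g b := Real.sSup_nonneg <| by
    rintro _ ⟨r, hr, rfl⟩
    exact hg r ⟨hr.1, hr.2.trans hbT⟩
  have hcoef := mul_rpow_le_inv_fourteen hC (by linarith) (le_max_right _ _)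
    (hω₁.1.1 a b ha hab hbT) hsmall
  have := hyp a b ha hab hbT (hsmall.trans hcL)
  rw [← runningSup] at this
  nlinarith

end
end

section
/- Let g be a continuous real-valued path on an interval I = [ℓ₁, ℓ₂], and let (y, m) ∈ C(I; ℝ_{≥0}) × V¹_1(I; ℝ_{≥0}) be a solution of the Skorohod problem associated with g in the domain ℝ_{≥0}. Then for all s ≤ t in I one has m_t − m_s ≤ 8 ‖g‖_{0,[s,t]}, where ‖g‖_{0,[s,t]} := sup_{s ≤ u < v ≤ t} |g_v − g_u|. -/
open MeasureTheory Set

noncomputable section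

/-- `(y, m)` (with Stieltjes measure `μ` of `m`) solves the Skorohod problem associated
with the continuous path `g` on `[ℓ₁,ℓ₂]` in the domain `ℝ_{≥0}`: `y ≥ 0`, `m` is a
nondecreasing continuous path starting at `0`, `δy = δg + δm`, `y_{ℓ₁} = g_{ℓ₁}`, and
the measure `dm` is carried by the set where `y` vanishes. -/
def SolvesSkorohod (ℓ₁ ℓ₂ : ℝ) (g y m : ℝ → ℝ) (μ : Measure ℝ) : Prop :=
  ContinuousOn y (Set.Icc ℓ₁ ℓ₂) ∧ (∀ t ∈ Set.Icc ℓ₁ ℓ₂, 0 ≤ y t) ∧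
  ContinuousOn m (Set.Icc ℓ₁ ℓ₂) ∧ MonotoneOn m (Set.Icc ℓ₁ ℓ₂) ∧
  m ℓ₁ = 0 ∧ (∀ t ∈ Set.Icc ℓ₁ ℓ₂, 0 ≤ m t) ∧
  y ℓ₁ = g ℓ₁ ∧
  (∀ s t, ℓ₁ ≤ s → s ≤ t → t ≤ ℓ₂ → y t - y s = (g t - g s) + (m t - m s)) ∧
  (∀ s t, ℓ₁ ≤ s → s ≤ t → t ≤ ℓ₂ → μ (Set.Ioc s t) = ENNReal.ofReal (m t - m s)) ∧
  μ {u | u ∈ Set.Ioc ℓ₁ ℓ₂ ∧ y u ≠ 0} = 0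

/-- `‖g‖_{0,[s,t]} := sup_{s ≤ u ≤ v ≤ t} |g_v - g_u|`, the oscillation of `g` on `[s,t]`. -/
def oscNorm (s t : ℝ) (g : ℝ → ℝ) : ℝ :=
  sSup {x | ∃ u v, s ≤ u ∧ u ≤ v ∧ v ≤ t ∧ x = |g v - g u|}

/-- **A priori bound for the one-dimensional Skorohod problem** (Lemma 4.2 /
`lem:skorohod-bound`): if `(y, m)` solves the Skorohod problem associated with a
continuous path `g` on `I = [ℓ₁, ℓ₂]` in the domain `ℝ_{≥0}`, then for all `s ≤ t` in `I`,
`δm_{st} ≤ 8 ‖g‖_{0,[s,t]}`. -/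
theorem skorohod_bound (ℓ₁ ℓ₂ : ℝ) (hl : ℓ₁ ≤ ℓ₂)
    (g y m : ℝ → ℝ) (hg : ContinuousOn g (Set.Icc ℓ₁ ℓ₂))
    (μ : Measure ℝ) (hsol : SolvesSkorohod ℓ₁ ℓ₂ g y m μ) :
    ∀ s t, ℓ₁ ≤ s → s ≤ t → t ≤ ℓ₂ → m t - m s ≤ 8 * oscNorm s t g := by
  obtain ⟨hy, hy0, hm, hmono, hm0, hmnn, hyl, hdyn, hμ, hnull⟩ := hsol
  intro s t hs hst htl
  have hsI : s ∈ Set.Icc ℓ₁ ℓ₂ := ⟨hs, hst.trans htl⟩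
  have htI : t ∈ Set.Icc ℓ₁ ℓ₂ := ⟨hs.trans hst, htl⟩
  -- boundedness of g and nonnegativity of oscNorm
  obtain ⟨C, hC⟩ := IsCompact.exists_bound_of_continuousOn isCompact_Icc hg
  have hbdd : BddAbove {x | ∃ u v, s ≤ u ∧ u ≤ v ∧ v ≤ t ∧ x = |g v - g u|} := by
    refine ⟨2 * C, ?_⟩
    rintro x ⟨u, v, hu, huv, hv, rfl⟩
    have huI : u ∈ Set.Icc ℓ₁ ℓ₂ := ⟨hs.trans hu, (huv.trans hv).trans htl⟩
    have hvI : v ∈ Set.Icc ℓ₁ ℓ₂ := ⟨hs.trans (hu.trans huv), hv.trans htl⟩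
    calc |g v - g u| ≤ |g v| + |g u| := abs_sub _ _
      _ ≤ C + C := add_le_add (hC v hvI) (hC u huI)
      _ = 2 * C := by ring
  have hmem0 : (0 : ℝ) ∈ {x | ∃ u v, s ≤ u ∧ u ≤ v ∧ v ≤ t ∧ x = |g v - g u|} :=
    ⟨s, s, le_refl s, le_refl s, hst, by simp⟩
  have hosc0 : 0 ≤ oscNorm s t g := le_csSup hbdd hmem0
  rcases le_or_gt (m t) (m s) with hle | hlt
  · have : m t - m s ≤ 0 := by linarith
    calc m t - m s ≤ 0 := this
      _ ≤ 8 * oscNorm s t g := by positivity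
  · -- there is a zero of y in Ioc s t
    have hz : ∃ z ∈ Set.Ioc s t, y z = 0 := by
      by_contra hcon
      push_neg at hcon
      have hsub : Set.Ioc s t ⊆ {u | u ∈ Set.Ioc ℓ₁ ℓ₂ ∧ y u ≠ 0} := by
        intro u hu
        exact ⟨⟨hs.trans_lt hu.1, hu.2.trans htl⟩, hcon u hu⟩
      have h1 : μ (Set.Ioc s t) = 0 := measure_mono_null hsub hnull
      rw [hμ s t hs hst htl] at h1
      have : m t - m s ≤ 0 := by
        by_contra h2
        push_neg at h2
        exact (ENNReal.ofReal_pos.mpr h2).ne' h1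
      linarith
    obtain ⟨z, hzmem, hzy⟩ := hz
    -- last zero of y in [s,t]
    set Z : Set ℝ := Set.Icc s t ∩ y ⁻¹' {0} with hZ
    have hZne : Z.Nonempty := ⟨z, ⟨hzmem.1.le, hzmem.2⟩, hzy⟩
    have hZclosed : IsClosed Z := by
      have : ContinuousOn y (Set.Icc s t) :=
        hy.mono (Set.Icc_subset_Icc hs htl)
      exact ContinuousOn.preimage_isClosed_of_isClosed this isClosed_Icc isClosed_singleton
    have hZcompact : IsCompact Z :=
      IsCompact.of_isClosed_subset isCompact_Icc hZclosed Set.inter_subset_left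
    set τ := sSup Z with hτ
    have hτZ : τ ∈ Z := hZcompact.sSup_mem hZne
    obtain ⟨⟨hsτ, hτt⟩, hyτ⟩ := hτZ
    have hyτ0 : y τ = 0 := hyτ
    have hτI : τ ∈ Set.Icc ℓ₁ ℓ₂ := ⟨hs.trans hsτ, hτt.trans htl⟩
    -- m is constant on [τ, t]
    have hmτt : m t = m τ := by
      have hsub : Set.Ioc τ t ⊆ {u | u ∈ Set.Ioc ℓ₁ ℓ₂ ∧ y u ≠ 0} := by
        intro u hu
        refine ⟨⟨hτI.1.trans_lt hu.1, hu.2.trans htl⟩, ?_⟩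
        intro hyu
        have huZ : u ∈ Z := ⟨⟨hsτ.trans hu.1.le, hu.2⟩, hyu⟩
        exact absurd (le_csSup hZcompact.bddAbove huZ) (not_le.mpr hu.1)
      have h1 : μ (Set.Ioc τ t) = 0 := measure_mono_null hsub hnull
      rw [hμ τ t hτI.1 hτt htl] at h1
      have h2 : m t - m τ ≤ 0 := by
        by_contra h2
        push_neg at h2
        exact (ENNReal.ofReal_pos.mpr h2).ne' h1
      have h3 : m τ ≤ m t := hmono hτI htI hτt
      linarith
    -- dynamics between s and τ
    have hdyn' : y τ - y s = (g τ - g s) + (m τ - m s) := hdyn s τ hs hsτ (hτt.trans htl)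
    have hys : 0 ≤ y s := hy0 s hsI
    have hmemτ : |g τ - g s| ∈ {x | ∃ u v, s ≤ u ∧ u ≤ v ∧ v ≤ t ∧ x = |g v - g u|} :=
      ⟨s, τ, le_refl s, hsτ, hτt, rfl⟩
    have hoscτ : |g τ - g s| ≤ oscNorm s t g := le_csSup hbdd hmemτ
    have habs : -(g τ - g s) ≤ |g τ - g s| := neg_le_abs _
    have : m t - m s ≤ oscNorm s t g := by
      rw [hmτt]
      have : m τ - m s = -y s - (g τ - g s) := by
        rw [hyτ0] at hdyn'; linarith
      linarith
    linarith


end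
end

section
/- Let g be a continuous real-valued path on an interval I = [ℓ₁, ℓ₂], and let (y, m) ∈ C(I; ℝ_{≥0}) × V¹_1(I; ℝ_{≥0}) be a solution of the Skorohod problem associated with g in ℝ_{≥0}. Then for all s ≤ t in I one has |y_t − y_s|² ≤ |g_t − g_s|² + 2 ∫_s^t (g_t − g_u) dm_u. In particular |y_t − y_s|² ≤ ‖g‖²_{0,[s,t]} + 2 ‖g‖_{0,[s,t]} (m_t − m_s), where ‖g‖_{0,[s,t]} := sup_{s ≤ u < v ≤ t} |g_v − g_u|. -/
open MeasureTheory Set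

noncomputable section

/-! The identity `y = 0` `dm`-a.e. turns `∫_s^t (g_t - g_u) dm_u` into
`y_t δm_{st} - ∫_s^t (m_t - m_u) dm_u`, and the last integral is at most `(δm_{st})² / 2`,
because it is the `dm ⊗ dm`-measure of the half `{u < v}` of the square `(s,t]²`.
Expanding `(δy_{st})² = (δg_{st} + δm_{st})²` then reduces the estimate to
`y_s δm_{st} ≥ 0`. -/

section HalfSquare

variable {α : Type*} [TopologicalSpace α] [LinearOrder α] [OrderClosedTopology α]
  [SecondCountableTopology α] [MeasurableSpace α] [OpensMeasurableSpace α]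

theorem two_mul_lintegral_measure_Ioi_le (ν : Measure α) [SFinite ν] :
    2 * ∫⁻ u, ν (Ioi u) ∂ν ≤ ν univ ^ 2 := by
  have hlt : MeasurableSet {p : α × α | p.1 < p.2} := measurableSet_lt'
  have hgt : MeasurableSet {p : α × α | p.2 < p.1} := measurableSet_lt measurable_snd measurable_fst
  have hhalf : (ν.prod ν) {p | p.1 < p.2} = ∫⁻ u, ν (Ioi u) ∂ν := Measure.prod_apply hlt
  have hswap : (ν.prod ν) {p | p.2 < p.1} = (ν.prod ν) {p | p.1 < p.2} := by
    conv_lhs => rw [← Measure.prod_swap]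
    exact Measure.map_apply measurable_swap hgt
  have hdisj : Disjoint {p : α × α | p.1 < p.2} {p | p.2 < p.1} :=
    disjoint_left.2 fun _ h₁ h₂ => lt_asymm h₁ h₂
  calc 2 * ∫⁻ u, ν (Ioi u) ∂ν
      = (ν.prod ν) ({p | p.1 < p.2} ∪ {p | p.2 < p.1}) := by
        rw [measure_union hdisj hgt, hswap, hhalf, two_mul]
    _ ≤ (ν.prod ν) univ := measure_mono (subset_univ _)
    _ = ν univ ^ 2 := by rw [← univ_prod_univ, Measure.prod_prod, sq]

theorem measurable_measureReal_Ioi (ν : Measure α) [SFinite ν] :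
    Measurable fun u => ν.real (Ioi u) :=
  (measurable_measure_prodMk_left (ν := ν) (measurableSet_lt' (α := α))).ennreal_toReal

theorem integrable_measureReal_Ioi (ν : Measure α) [IsFiniteMeasure ν] :
    Integrable (fun u => ν.real (Ioi u)) ν :=
  .of_bound (measurable_measureReal_Ioi ν).aestronglyMeasurable (ν.real univ) <|
    .of_forall fun u => by
      rw [Real.norm_of_nonneg measureReal_nonneg]
      exact measureReal_mono (subset_univ _)

theorem integral_measureReal_Ioi_le (ν : Measure α) [IsFiniteMeasure ν] :
    ∫ u, ν.real (Ioi u) ∂ν ≤ ν.real univ ^ 2 / 2 := by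
  have hlintegral : ∫ u, ν.real (Ioi u) ∂ν = (∫⁻ u, ν (Ioi u) ∂ν).toReal := by
    rw [integral_eq_lintegral_of_nonneg_ae (.of_forall fun _ => measureReal_nonneg)
      (measurable_measureReal_Ioi ν).aestronglyMeasurable]
    simp only [ofReal_measureReal (measure_ne_top ν _)]
  have h := ENNReal.toReal_mono (by finiteness) (two_mul_lintegral_measure_Ioi_le ν)
  rw [ENNReal.toReal_mul, ENNReal.toReal_pow] at h
  rw [hlintegral, measureReal_def]
  norm_num at h
  linarith

end HalfSquare

theorem abs_sub_le_oscNorm {g : ℝ → ℝ} {s t u v : ℝ} (hg : ContinuousOn g (Icc s t))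
    (hsu : s ≤ u) (huv : u ≤ v) (hvt : v ≤ t) : |g v - g u| ≤ oscNorm s t g := by
  have hcont : ContinuousOn (fun p : ℝ × ℝ => |g p.2 - g p.1|) (Icc s t ×ˢ Icc s t) :=
    ((hg.comp continuousOn_snd fun _ hp => hp.2).sub
      (hg.comp continuousOn_fst fun _ hp => hp.1)).abs
  refine le_csSup (((isCompact_Icc.prod isCompact_Icc).bddAbove_image hcont).mono ?_)
    ⟨u, v, hsu, huv, hvt, rfl⟩
  rintro _ ⟨a, b, hsa, hab, hbt, rfl⟩
  exact ⟨(a, b), ⟨⟨hsa, hab.trans hbt⟩, hsa.trans hab, hbt⟩, rfl⟩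

namespace SolvesSkorohod

variable {ℓ₁ ℓ₂ s t : ℝ} {g y m : ℝ → ℝ} {μ : Measure ℝ}

theorem measureReal_Ioc (hsol : SolvesSkorohod ℓ₁ ℓ₂ g y m μ)
    (hs : ℓ₁ ≤ s) (hst : s ≤ t) (ht : t ≤ ℓ₂) : μ.real (Ioc s t) = m t - m s := by
  obtain ⟨-, -, -, hm_mono, -, -, -, -, hμ, -⟩ := hsol
  rw [measureReal_def, hμ s t hs hst ht, ENNReal.toReal_ofReal]
  exact sub_nonneg.2 (hm_mono ⟨hs, hst.trans ht⟩ ⟨hs.trans hst, ht⟩ hst)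

theorem measure_Ioc_ne_top (hsol : SolvesSkorohod ℓ₁ ℓ₂ g y m μ)
    (hs : ℓ₁ ≤ s) (hst : s ≤ t) (ht : t ≤ ℓ₂) : μ (Ioc s t) ≠ ⊤ := by
  obtain ⟨-, -, -, -, -, -, -, -, hμ, -⟩ := hsol
  rw [hμ s t hs hst ht]
  exact ENNReal.ofReal_ne_top

theorem ae_restrict_Ioc_eq_zero (hsol : SolvesSkorohod ℓ₁ ℓ₂ g y m μ)
    (hs : ℓ₁ ≤ s) (ht : t ≤ ℓ₂) : ∀ᵐ u ∂μ.restrict (Ioc s t), y u = 0 := by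
  obtain ⟨-, -, -, -, -, -, -, -, -, hcarried⟩ := hsol
  rw [ae_iff, Measure.restrict_apply' measurableSet_Ioc]
  refine measure_mono_null ?_ hcarried
  exact fun u ⟨hyu, hsu, hut⟩ => ⟨⟨hs.trans_lt hsu, hut.trans ht⟩, hyu⟩

theorem ae_restrict_Ioc_sub_eq (hsol : SolvesSkorohod ℓ₁ ℓ₂ g y m μ)
    (hs : ℓ₁ ≤ s) (ht : t ≤ ℓ₂) :
    ∀ᵐ u ∂μ.restrict (Ioc s t), g t - g u = y t - (μ.restrict (Ioc s t)).real (Ioi u) := by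
  filter_upwards [ae_restrict_mem measurableSet_Ioc, hsol.ae_restrict_Ioc_eq_zero hs ht]
    with u ⟨hsu, hut⟩ hyu
  have hIoi : Ioi u ∩ Ioc s t = Ioc u t := by
    ext v
    simp only [mem_inter_iff, mem_Ioi, mem_Ioc]
    exact ⟨fun ⟨huv, _, hvt⟩ => ⟨huv, hvt⟩, fun ⟨huv, hvt⟩ => ⟨huv, hsu.trans huv, hvt⟩⟩
  have hu : ℓ₁ ≤ u := hs.trans hsu.le
  rw [measureReal_restrict_apply measurableSet_Ioi, hIoi, hsol.measureReal_Ioc hu hut ht]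
  obtain ⟨-, -, -, -, -, -, -, hδ, -, -⟩ := hsol
  linarith [hδ u t hu hut ht]

theorem setIntegral_sub_ge (hsol : SolvesSkorohod ℓ₁ ℓ₂ g y m μ)
    (hs : ℓ₁ ≤ s) (hst : s ≤ t) (ht : t ≤ ℓ₂) :
    y t * (m t - m s) - (m t - m s) ^ 2 / 2 ≤ ∫ u in Ioc s t, (g t - g u) ∂μ := by
  have : IsFiniteMeasure (μ.restrict (Ioc s t)) :=
    isFiniteMeasure_restrict.2 (hsol.measure_Ioc_ne_top hs hst ht)
  have hmass : (μ.restrict (Ioc s t)).real univ = m t - m s := by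
    rw [measureReal_restrict_apply_univ, hsol.measureReal_Ioc hs hst ht]
  rw [integral_congr_ae (hsol.ae_restrict_Ioc_sub_eq hs ht),
    integral_sub (integrable_const _) (integrable_measureReal_Ioi _), integral_const,
    smul_eq_mul, hmass]
  have hhalf := integral_measureReal_Ioi_le (μ.restrict (Ioc s t))
  rw [hmass] at hhalf
  linarith

theorem sq_abs_sub_le (hsol : SolvesSkorohod ℓ₁ ℓ₂ g y m μ)
    (hs : ℓ₁ ≤ s) (hst : s ≤ t) (ht : t ≤ ℓ₂) :
    |y t - y s| ^ 2 ≤ |g t - g s| ^ 2 + 2 * ∫ u in Ioc s t, (g t - g u) ∂μ := by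
  have hδm : 0 ≤ m t - m s := by
    rw [← hsol.measureReal_Ioc hs hst ht]
    exact measureReal_nonneg
  have hlower := hsol.setIntegral_sub_ge hs hst ht
  obtain ⟨-, hy_nonneg, -, -, -, -, -, hδ, -, -⟩ := hsol
  have hys : 0 ≤ y s := hy_nonneg s ⟨hs, hst.trans ht⟩
  have hδy := hδ s t hs hst ht
  rw [sq_abs, sq_abs, hδy]
  nlinarith [mul_nonneg hys hδm]

theorem setIntegral_sub_le_oscNorm_mul (hsol : SolvesSkorohod ℓ₁ ℓ₂ g y m μ)
    (hg : ContinuousOn g (Icc s t)) (hs : ℓ₁ ≤ s) (hst : s ≤ t) (ht : t ≤ ℓ₂) :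
    ∫ u in Ioc s t, (g t - g u) ∂μ ≤ oscNorm s t g * (m t - m s) := by
  rw [← hsol.measureReal_Ioc hs hst ht]
  refine (Real.le_norm_self _).trans <| norm_setIntegral_le_of_norm_le_const
    (hsol.measure_Ioc_ne_top hs hst ht).lt_top fun u hu => ?_
  exact abs_sub_le_oscNorm hg hu.1.le hu.2 le_rfl

end SolvesSkorohod

theorem skorohod_energy_estimate_general (ℓ₁ ℓ₂ : ℝ)
    (g y m : ℝ → ℝ) (hg : ContinuousOn g (Set.Icc ℓ₁ ℓ₂))
    (μ : Measure ℝ) (hsol : SolvesSkorohod ℓ₁ ℓ₂ g y m μ) :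
    ∀ s t, ℓ₁ ≤ s → s ≤ t → t ≤ ℓ₂ →
      |y t - y s| ^ 2 ≤ |g t - g s| ^ 2 + 2 * ∫ u in Set.Ioc s t, (g t - g u) ∂μ ∧
      |y t - y s| ^ 2 ≤ oscNorm s t g ^ 2 + 2 * oscNorm s t g * (m t - m s) := by
  intro s t hs hst ht
  have hgst : ContinuousOn g (Icc s t) := hg.mono (Icc_subset_Icc hs ht)
  have henergy := hsol.sq_abs_sub_le hs hst ht
  refine ⟨henergy, henergy.trans ?_⟩
  have hδg : |g t - g s| ^ 2 ≤ oscNorm s t g ^ 2 :=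
    pow_le_pow_left₀ (abs_nonneg _) (abs_sub_le_oscNorm hgst le_rfl hst le_rfl) 2
  linarith [hsol.setIntegral_sub_le_oscNorm_mul hgst hs hst ht]

/-- **Energy estimate for the one-dimensional Skorohod problem** (from the proof of
Lemma 4.2): if `(y, m)` solves the Skorohod problem associated with a continuous path `g`
on `I = [ℓ₁, ℓ₂]` in `ℝ_{≥0}`, then for all `s ≤ t` in `I`,
`|δy_{st}|² ≤ |δg_{st}|² + 2 ∫_s^t (g_t - g_u) dm_u`, and in particular
`|δy_{st}|² ≤ ‖g‖²_{0,[s,t]} + 2 ‖g‖_{0,[s,t]} δm_{st}`. -/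
theorem skorohod_energy_estimate (ℓ₁ ℓ₂ : ℝ) (hl : ℓ₁ ≤ ℓ₂)
    (g y m : ℝ → ℝ) (hg : ContinuousOn g (Set.Icc ℓ₁ ℓ₂))
    (μ : Measure ℝ) (hsol : SolvesSkorohod ℓ₁ ℓ₂ g y m μ) :
    ∀ s t, ℓ₁ ≤ s → s ≤ t → t ≤ ℓ₂ →
      |y t - y s| ^ 2 ≤ |g t - g s| ^ 2 + 2 * ∫ u in Set.Ioc s t, (g t - g u) ∂μ ∧
      |y t - y s| ^ 2 ≤ oscNorm s t g ^ 2 + 2 * oscNorm s t g * (m t - m s) :=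
  skorohod_energy_estimate_general ℓ₁ ℓ₂ g y m hg μ hsol

end
end
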